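/- Inductive property of windows: if the window starting at position i of a play closes at position j (i.e., j is the first position after i such that the total payoff of π(i,j) is nonnegative), then for all k with i ≤ k < j, the window π(k, j) is closed, i.e., there exists m with k < m ≤ j such that the total payoff of π(k, m) is nonnegative. -/
import Mathlib

/-- Total payoff of the segment of play `π` from position `i` to position `m`. -/
def TPseg {V : Type*} (w : V → V → ℚ) (π : ℕ → V) (i m : ℕ) : ℚ :=
  ∑ k ∈ Finset.Ico i m, w (π k) (π (k + 1))

/-- Inductive property of windows. -/
theorem stmt_2 {V : Type*} (w : V → V → ℚ) (π : ℕ → V) (i j : ℕ)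
    (hij : i < j)
    (hclose : 0 ≤ TPseg w π i j)
    (hfirst : ∀ m, i < m → m < j → TPseg w π i m < 0) :
    ∀ k, i ≤ k → k < j → ∃ m, k < m ∧ m ≤ j ∧ 0 ≤ TPseg w π k m := by
  intro k hik hkj
  refine ⟨j, hkj, le_refl j, ?_⟩
  rcases eq_or_lt_of_le hik with rfl | hik'
  · exact hclose
  · have hsplit : TPseg w π i k + TPseg w π k j = TPseg w π i j :=
      Finset.sum_Ico_consecutive _ (le_of_lt hik') (le_of_lt hkj)
    have := hfirst k hik' hkj
    linarith
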